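/- Let G be a finite simple graph with vertex set V, let k be a positive integer, let T ⊆ V satisfy |Γ_T(Z)| ≥ k − 1 for every Steiner T-cut Z, and fix r ∈ T. Let D be the family of demand cuts, i.e., Steiner (T,r)-cuts X with |Γ_T(X)| = k − 1. Then D is uncrossable if and only if there are no X, Y ∈ D with X ∩ T ⊆ Γ(Y). -/

import Mathlib

/-- `nbr G X` is Γ(X): the set of vertices outside `X` adjacent to a vertex of `X`. -/
def nbr {V : Type*} [Fintype V] [DecidableEq V] (G : SimpleGraph V) [DecidableRel G.Adj]
    (X : Finset V) : Finset V :=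
  Finset.univ.filter (fun v => v ∉ X ∧ ∃ u ∈ X, G.Adj u v)

/-- `cl G X` is X⁺ = X ∪ Γ(X). -/
def cl {V : Type*} [Fintype V] [DecidableEq V] (G : SimpleGraph V) [DecidableRel G.Adj]
    (X : Finset V) : Finset V :=
  X ∪ nbr G X

/-- A demand cut: a Steiner (T,r)-cut X with |Γ_T(X)| = k - 1. -/
def IsDemand {V : Type*} [Fintype V] [DecidableEq V] (G : SimpleGraph V) [DecidableRel G.Adj]
    (T : Finset V) (k : ℕ) (r : V) (X : Finset V) : Prop :=
  (X ∩ T).Nonempty ∧ (T \ cl G X).Nonempty ∧ r ∉ cl G X ∧ (nbr G X ∩ T).card = k - 1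

/-- A min-core: a minimal demand cut. -/
def IsMinCore {V : Type*} [Fintype V] [DecidableEq V] (G : SimpleGraph V) [DecidableRel G.Adj]
    (T : Finset V) (k : ℕ) (r : V) (X : Finset V) : Prop :=
  IsDemand G T k r X ∧ ∀ Y : Finset V, IsDemand G T k r Y → Y ⊆ X → Y = X

/-- A core: a demand cut containing exactly one min-core as a subset. -/
def IsCore {V : Type*} [Fintype V] [DecidableEq V] (G : SimpleGraph V) [DecidableRel G.Adj]
    (T : Finset V) (k : ℕ) (r : V) (X : Finset V) : Prop :=
  IsDemand G T k r X ∧ ∃! Z : Finset V, IsMinCore G T k r Z ∧ Z ⊆ X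

/-- The core family C(Z) of a min-core Z: the cores containing Z. -/
def coreFam {V : Type*} [Fintype V] [DecidableEq V] (G : SimpleGraph V) [DecidableRel G.Adj]
    (T : Finset V) (k : ℕ) (r : V) (Z : Finset V) : Set (Finset V) :=
  {X | IsCore G T k r X ∧ Z ⊆ X}

/-- A family F of subsets of V is uncrossable with respect to T. -/
def Uncrossable {V : Type*} [Fintype V] [DecidableEq V] (G : SimpleGraph V)
    [DecidableRel G.Adj] (T : Finset V) (F : Set (Finset V)) : Prop :=
  (∀ X ∈ F, ∀ Y ∈ F, (X ∩ Y ∈ F ∧ X ∪ Y ∈ F) ∨ (X \ cl G Y ∈ F ∧ Y \ cl G X ∈ F)) ∧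
  (∀ X ∈ F, ∀ Y ∈ F, (X ∩ Y ∩ T).Nonempty → X ∩ Y ∈ F ∧ X ∪ Y ∈ F)

/-!
`Z ↦ |Γ_T(Z)|` is submodular and posimodular:
`|Γ_T(X ∩ Y)| + |Γ_T(X ∪ Y)|` and `|Γ_T(X \ Y⁺)| + |Γ_T(Y \ X⁺)|` are both at most
`|Γ_T(X)| + |Γ_T(Y)|`. For demand cuts `X, Y` the right side is `2(k - 1)`, while every Steiner
`T`-cut has `|Γ_T| ≥ k - 1`; so each pair of new sets consists of demand cuts as soon as both
sets are Steiner `(T, r)`-cuts. Avoiding `r` is inherited from `X` and `Y`, and `r ∈ T` witnesses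
`T \ Z⁺ ≠ ∅`. The only condition left is meeting `T`: if `X ∩ Y ∩ T = ∅`, then `X \ Y⁺` meets `T`
unless `X ∩ T ⊆ Γ(Y)`. Conversely, if `X ∩ T ⊆ Γ(Y)`, then neither `X ∩ Y` nor `X \ Y⁺` meets `T`.
-/

open Finset

lemma Finset.card_inter_add_card_inter_le {α : Type*} [DecidableEq α] {A B C D : Finset α}
    (T : Finset α) (hunion : A ∪ B ⊆ C ∪ D) (hinter : A ∩ B ⊆ C ∩ D) :
    #(A ∩ T) + #(B ∩ T) ≤ #(C ∩ T) + #(D ∩ T) := by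
  rw [← card_union_add_card_inter, ← card_union_add_card_inter (C ∩ T),
    ← union_inter_distrib_right, ← union_inter_distrib_right,
    ← inter_inter_distrib_right, ← inter_inter_distrib_right]
  gcongr

section Neighbourhood

variable {V : Type*} [Fintype V] [DecidableEq V] (G : SimpleGraph V) [DecidableRel G.Adj]

lemma mem_nbr {v : V} {X : Finset V} : v ∈ nbr G X ↔ v ∉ X ∧ ∃ u ∈ X, G.Adj u v := by
  simp [nbr]

lemma mem_cl {v : V} {X : Finset V} : v ∈ cl G X ↔ v ∈ X ∨ ∃ u ∈ X, G.Adj u v := by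
  rw [cl, mem_union, mem_nbr]
  tauto

lemma nbr_subset_cl (X : Finset V) : nbr G X ⊆ cl G X := subset_union_right

lemma cl_mono {X Y : Finset V} (h : X ⊆ Y) : cl G X ⊆ cl G Y := by
  intro v
  simp only [mem_cl]
  rintro (hv | ⟨u, hu, huv⟩)
  exacts [Or.inl (h hv), Or.inr ⟨u, h hu, huv⟩]

lemma cl_union (X Y : Finset V) : cl G (X ∪ Y) = cl G X ∪ cl G Y := by
  ext v
  simp only [mem_union, mem_cl]
  grind

lemma notMem_of_mem_nbr_sdiff_cl {v : V} {X Y : Finset V} (h : v ∈ nbr G (X \ cl G Y)) :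
    v ∉ Y := by
  obtain ⟨-, u, hu, huv⟩ := (mem_nbr G).1 h
  exact fun hv => (mem_sdiff.1 hu).2 ((mem_cl G).2 (Or.inr ⟨v, hv, huv.symm⟩))

lemma nbr_sdiff_cl_subset (X Y : Finset V) : nbr G (X \ cl G Y) ⊆ nbr G X ∪ nbr G Y := by
  intro v hv
  have hvY := notMem_of_mem_nbr_sdiff_cl G hv
  obtain ⟨hvXY, u, hu, huv⟩ := (mem_nbr G).1 hv
  by_cases hvX : v ∈ X
  · have hvcl : v ∈ cl G Y := by_contra fun h => hvXY (mem_sdiff.2 ⟨hvX, h⟩)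
    exact mem_union_right _ ((mem_union.1 hvcl).resolve_left hvY)
  · exact mem_union_left _ ((mem_nbr G).2 ⟨hvX, u, (mem_sdiff.1 hu).1, huv⟩)

lemma nbr_sdiff_cl_inter_subset (X Y : Finset V) :
    nbr G (X \ cl G Y) ∩ nbr G (Y \ cl G X) ⊆ nbr G X ∩ nbr G Y := by
  intro v hv
  obtain ⟨hvX, hvY⟩ := mem_inter.1 hv
  obtain ⟨-, u, hu, huv⟩ := (mem_nbr G).1 hvX
  obtain ⟨-, w, hw, hwv⟩ := (mem_nbr G).1 hvY
  exact mem_inter.2 ⟨(mem_nbr G).2 ⟨notMem_of_mem_nbr_sdiff_cl G hvY, u, (mem_sdiff.1 hu).1, huv⟩,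
    (mem_nbr G).2 ⟨notMem_of_mem_nbr_sdiff_cl G hvX, w, (mem_sdiff.1 hw).1, hwv⟩⟩

lemma card_nbr_inter_add_card_nbr_union_le (T X Y : Finset V) :
    #(nbr G (X ∩ Y) ∩ T) + #(nbr G (X ∪ Y) ∩ T) ≤ #(nbr G X ∩ T) + #(nbr G Y ∩ T) := by
  apply card_inter_add_card_inter_le <;> intro v <;>
    simp only [mem_union, mem_inter, mem_nbr] <;> grind

lemma card_nbr_sdiff_cl_add_card_nbr_sdiff_cl_le (T X Y : Finset V) :
    #(nbr G (X \ cl G Y) ∩ T) + #(nbr G (Y \ cl G X) ∩ T) ≤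
      #(nbr G X ∩ T) + #(nbr G Y ∩ T) :=
  card_inter_add_card_inter_le T
    (union_subset (nbr_sdiff_cl_subset G X Y)
      ((nbr_sdiff_cl_subset G Y X).trans (union_comm _ _).subset))
    (nbr_sdiff_cl_inter_subset G X Y)

lemma inter_eq_empty_and_sdiff_cl_inter_eq_empty {T X Y : Finset V} (h : X ∩ T ⊆ nbr G Y) :
    X ∩ Y ∩ T = ∅ ∧ (X \ cl G Y) ∩ T = ∅ := by
  constructor <;> refine eq_empty_of_forall_notMem fun v hv => ?_
  · obtain ⟨⟨hvX, hvY⟩, hvT⟩ := mem_inter.1 hv |>.imp_left mem_inter.1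
    exact ((mem_nbr G).1 (h (mem_inter.2 ⟨hvX, hvT⟩))).1 hvY
  · obtain ⟨⟨hvX, hvcl⟩, hvT⟩ := mem_inter.1 hv |>.imp_left mem_sdiff.1
    exact hvcl (nbr_subset_cl G Y (h (mem_inter.2 ⟨hvX, hvT⟩)))

lemma sdiff_cl_inter_nonempty {T X Y : Finset V} (hXY : X ∩ Y ∩ T = ∅)
    (h : ¬ X ∩ T ⊆ nbr G Y) : ((X \ cl G Y) ∩ T).Nonempty := by
  obtain ⟨v, hv, hvN⟩ := not_subset.1 h
  obtain ⟨hvX, hvT⟩ := mem_inter.1 hv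
  have hvY' : v ∉ Y := fun hvY' => (eq_empty_iff_forall_notMem.1 hXY) v
    (mem_inter.2 ⟨mem_inter.2 ⟨hvX, hvY'⟩, hvT⟩)
  exact ⟨v, mem_inter.2 ⟨mem_sdiff.2 ⟨hvX, fun hcl => (mem_union.1 hcl).elim hvY' hvN⟩, hvT⟩⟩

end Neighbourhood

section Demand

variable {V : Type*} [Fintype V] [DecidableEq V] (G : SimpleGraph V) [DecidableRel G.Adj]

def SteinerCutBound (T : Finset V) (k : ℕ) : Prop :=
  ∀ Z : Finset V, (Z ∩ T).Nonempty → (T \ cl G Z).Nonempty → k - 1 ≤ #(nbr G Z ∩ T)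

variable {T : Finset V} {k : ℕ} {r : V}

lemma isDemand_pair_of_card_add_le (hT : SteinerCutBound G T k) (hr : r ∈ T)
    {X Y A B : Finset V} (hX : IsDemand G T k r X) (hY : IsDemand G T k r Y)
    (hA : (A ∩ T).Nonempty) (hB : (B ∩ T).Nonempty) (hrA : r ∉ cl G A) (hrB : r ∉ cl G B)
    (hcard : #(nbr G A ∩ T) + #(nbr G B ∩ T) ≤ #(nbr G X ∩ T) + #(nbr G Y ∩ T)) :
    IsDemand G T k r A ∧ IsDemand G T k r B := by
  have hAcut : (T \ cl G A).Nonempty := ⟨r, mem_sdiff.2 ⟨hr, hrA⟩⟩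
  have hBcut : (T \ cl G B).Nonempty := ⟨r, mem_sdiff.2 ⟨hr, hrB⟩⟩
  have hAlow := hT A hA hAcut
  have hBlow := hT B hB hBcut
  have hXcard := hX.2.2.2
  have hYcard := hY.2.2.2
  exact ⟨⟨hA, hAcut, hrA, by omega⟩, ⟨hB, hBcut, hrB, by omega⟩⟩

lemma IsDemand.inter_union (hT : SteinerCutBound G T k) (hr : r ∈ T) {X Y : Finset V}
    (hX : IsDemand G T k r X) (hY : IsDemand G T k r Y) (hXY : (X ∩ Y ∩ T).Nonempty) :
    IsDemand G T k r (X ∩ Y) ∧ IsDemand G T k r (X ∪ Y) :=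
  isDemand_pair_of_card_add_le G hT hr hX hY hXY
    (hX.1.mono (inter_subset_inter_right subset_union_left))
    (fun h => hX.2.2.1 (cl_mono G inter_subset_left h))
    (by rw [cl_union]; exact notMem_union.2 ⟨hX.2.2.1, hY.2.2.1⟩)
    (card_nbr_inter_add_card_nbr_union_le G T X Y)

lemma IsDemand.sdiff_cl (hT : SteinerCutBound G T k) (hr : r ∈ T) {X Y : Finset V}
    (hX : IsDemand G T k r X) (hY : IsDemand G T k r Y) (hXY : X ∩ Y ∩ T = ∅)
    (hXY' : ¬ X ∩ T ⊆ nbr G Y) (hYX' : ¬ Y ∩ T ⊆ nbr G X) :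
    IsDemand G T k r (X \ cl G Y) ∧ IsDemand G T k r (Y \ cl G X) :=
  isDemand_pair_of_card_add_le G hT hr hX hY
    (sdiff_cl_inter_nonempty G hXY hXY')
    (sdiff_cl_inter_nonempty G (by rwa [inter_comm Y]) hYX')
    (fun h => hX.2.2.1 (cl_mono G sdiff_subset h))
    (fun h => hY.2.2.1 (cl_mono G sdiff_subset h))
    (card_nbr_sdiff_cl_add_card_nbr_sdiff_cl_le G T X Y)

end Demand

theorem stmt_10_general {V : Type*} [Fintype V] [DecidableEq V]
    (G : SimpleGraph V) [DecidableRel G.Adj] (k : ℕ)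
    (T : Finset V)
    -- |Γ_T(Z)| ≥ k-1 for every Steiner T-cut Z
    (hTconn : ∀ Z : Finset V, (Z ∩ T).Nonempty → (T \ cl G Z).Nonempty →
      k - 1 ≤ (nbr G Z ∩ T).card)
    (r : V) (hr : r ∈ T) :
    Uncrossable G T {X : Finset V | IsDemand G T k r X} ↔
      ¬ ∃ X ∈ {X : Finset V | IsDemand G T k r X}, ∃ Y ∈ {X : Finset V | IsDemand G T k r X},
        X ∩ T ⊆ nbr G Y := by
  constructor
  · rintro ⟨huncross, -⟩ ⟨X, hX, Y, hY, hsub⟩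
    obtain ⟨hinter, hsdiff⟩ := inter_eq_empty_and_sdiff_cl_inter_eq_empty G hsub
    rcases huncross X hX Y hY with ⟨hXY, -⟩ | ⟨hXY, -⟩
    exacts [hXY.1.ne_empty hinter, hXY.1.ne_empty hsdiff]
  · intro hno
    have hnot : ∀ X Y, IsDemand G T k r X → IsDemand G T k r Y → ¬ X ∩ T ⊆ nbr G Y :=
      fun X Y hX hY h => hno ⟨X, hX, Y, hY, h⟩
    refine ⟨fun X hX Y hY => ?_, fun X hX Y hY => IsDemand.inter_union G hTconn hr hX hY⟩
    by_cases hXY : (X ∩ Y ∩ T).Nonempty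
    · exact .inl (IsDemand.inter_union G hTconn hr hX hY hXY)
    · exact .inr (IsDemand.sdiff_cl G hTconn hr hX hY (not_nonempty_iff_eq_empty.1 hXY)
        (hnot X Y hX hY) (hnot Y X hY hX))

theorem stmt_10 {V : Type*} [Fintype V] [DecidableEq V]
    (G : SimpleGraph V) [DecidableRel G.Adj] (k : ℕ) (hk : 1 ≤ k)
    (T : Finset V)
    -- |Γ_T(Z)| ≥ k-1 for every Steiner T-cut Z
    (hTconn : ∀ Z : Finset V, (Z ∩ T).Nonempty → (T \ cl G Z).Nonempty →
      k - 1 ≤ (nbr G Z ∩ T).card)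
    (r : V) (hr : r ∈ T) :
    Uncrossable G T {X : Finset V | IsDemand G T k r X} ↔
      ¬ ∃ X ∈ {X : Finset V | IsDemand G T k r X}, ∃ Y ∈ {X : Finset V | IsDemand G T k r X},
        X ∩ T ⊆ nbr G Y :=
  stmt_10_general G k T hTconn r hr
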